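/- Let K be a field of characteristic 0, V a finite-dimensional K-vector space with basis S, and D the subgroup of GL(V) of all automorphisms that are diagonal with respect to S. Then the normalizer of D in GL(V) equals D·P(Perm(S)) = { d ∘ P_σ : d ∈ D, σ a permutation of S }, where P_σ ∈ GL(V) is the automorphism with P_σ(α) = σ(α) for all α ∈ S. -/

import Mathlib

/-!
If `g` normalizes `D`, pick `d ∈ D` whose diagonal entries are pairwise distinct (possible in
characteristic `0`). Then `g d' g⁻¹ = d` for some `d' ∈ D`, so `g` maps every basis vector to an
eigenvector of `d`; the eigenvectors of `d` are the nonzero multiples of basis vectors, so `g` is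
monomial, i.e. `g = d'' ∘ P_σ` with `d'' ∈ D`. Conversely, a monomial map permutes the coordinate
lines, so conjugation by it maps `D` onto `D`.
-/

section

variable {K V : Type*} [Field K] [CharZero K] [AddCommGroup V] [Module K V]
variable {S : Type*} [Fintype S] [DecidableEq S]

/-- The set `D` of all automorphisms of `V` which are diagonal with respect to the
basis `S` (each basis vector is mapped to a scalar multiple of itself). -/
def DiagSet (b : Module.Basis S K V) : Set (V ≃ₗ[K] V) :=
  {g | ∀ s : S, ∃ c : K, g (b s) = c • b s}

/-- For a permutation `σ` of `S`, `P_σ ∈ GL(V)` is the automorphism determined by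
`P_σ(α) = σ(α)` for every basis vector `α ∈ S`. -/
noncomputable def PermMap (b : Module.Basis S K V) (σ : Equiv.Perm S) : V ≃ₗ[K] V :=
  b.equiv b σ

end

open Function Module

lemma exists_injective_units (K S : Type*) [Field K] [CharZero K] [Countable S] :
    ∃ w : S → Kˣ, Injective w :=
  let ⟨f⟩ := nonempty_embedding_nat S
  ⟨fun s => Units.mk0 ((f s : K) + 1) (Nat.cast_add_one_ne_zero _),
    fun s t h => f.injective (by simpa using congrArg Units.val h)⟩

section

variable {K V S : Type*} [Field K] [AddCommGroup V] [Module K V] (b : Basis S K V)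

@[simp]
lemma permMap_apply_basis (σ : Equiv.Perm S) (s : S) : PermMap b σ (b s) = b (σ s) :=
  b.equiv_apply s b σ

@[simp]
lemma permMap_symm_apply_basis (σ : Equiv.Perm S) (s : S) :
    (PermMap b σ).symm (b s) = b (σ.symm s) := by
  rw [PermMap, Basis.equiv_symm, Basis.equiv_apply]

lemma exists_equiv_apply_basis_eq_smul (w : S → Kˣ) :
    ∃ d : V ≃ₗ[K] V, ∀ s, d (b s) = (w s : K) • b s :=
  ⟨b.equiv (b.unitsSMul w) (Equiv.refl S), fun s => by
    simp [Basis.unitsSMul_apply, Units.smul_def]⟩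

lemma repr_apply_of_apply_basis_eq_smul {f : V →ₗ[K] V} {w : S → K}
    (hf : ∀ s, f (b s) = w s • b s) (v : V) (t : S) :
    b.repr (f v) t = w t * b.repr v t := by
  have hcoord : (b.coord t).comp f = w t • b.coord t := b.ext fun s => by
    by_cases hst : s = t
    · subst hst; simp [hf]
    · simp [hf, hst]
  exact LinearMap.congr_fun hcoord v

lemma exists_eq_smul_basis_of_apply_eq_smul {f : V →ₗ[K] V} {w : S → K} (hw : Injective w)
    (hf : ∀ s, f (b s) = w s • b s) {v : V} (hv : v ≠ 0) {c : K} (hfv : f v = c • v) :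
    ∃ s, ∃ a : K, v = a • b s := by
  have eigenvalue : ∀ t, b.repr v t ≠ 0 → w t = c := fun t ht =>
    mul_right_cancel₀ ht (by rw [← repr_apply_of_apply_basis_eq_smul b hf, hfv]; simp)
  obtain ⟨s, hs⟩ := Finsupp.ne_iff.mp (b.repr.map_ne_zero_iff.mpr hv)
  refine ⟨s, b.repr v s, ?_⟩
  rw [← b.repr_symm_single, LinearEquiv.eq_symm_apply]
  ext t
  by_cases hts : t = s
  · simp [hts]
  · rw [Finsupp.single_eq_of_ne hts]
    by_contra ht
    exact hts (hw ((eigenvalue t ht).trans (eigenvalue s hs).symm))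

def IsMonomial (τ : S → S) (g : V ≃ₗ[K] V) : Prop :=
  ∀ s, ∃ c : K, g (b s) = c • b (τ s)

variable {b}

lemma IsMonomial.injective {τ : S → S} {g : V ≃ₗ[K] V} (h : IsMonomial b τ g) :
    Injective τ := by
  intro t t' htt
  obtain ⟨a, ha⟩ := h t
  obtain ⟨a', ha'⟩ := h t'
  rw [← htt] at ha'
  have ha0 : a ≠ 0 := by rintro rfl; simp [b.ne_zero] at ha
  have hpair : a' • b t = a • b t' :=
    g.injective (by rw [map_smul, map_smul, ha, ha', smul_smul, smul_smul, mul_comm])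
  rw [← b.repr_symm_single, ← b.repr_symm_single] at hpair
  rcases (Finsupp.single_eq_single_iff _ _ _ _).mp (b.repr.symm.injective hpair) with
    ⟨htt', -⟩ | ⟨-, ha0'⟩
  · exact htt'
  · exact absurd ha0' ha0

lemma IsMonomial.exists_perm [Finite S] {τ : S → S} {g : V ≃ₗ[K] V} (h : IsMonomial b τ g) :
    ∃ σ : Equiv.Perm S, IsMonomial b σ g :=
  ⟨Equiv.ofBijective τ (Finite.injective_iff_bijective.mp h.injective), h⟩

lemma IsMonomial.symm {σ : Equiv.Perm S} {g : V ≃ₗ[K] V} (h : IsMonomial b σ g) :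
    IsMonomial b σ.symm g.symm := by
  intro s
  obtain ⟨c, hc⟩ := h (σ.symm s)
  rw [Equiv.apply_symm_apply] at hc
  have hc0 : c ≠ 0 := by rintro rfl; simp [b.ne_zero] at hc
  have hsymm := congrArg g.symm hc
  rw [g.symm_apply_apply, map_smul] at hsymm
  exact ⟨c⁻¹, by rw [hsymm, inv_smul_smul₀ hc0]⟩

lemma IsMonomial.conj_mem {σ : Equiv.Perm S} {g : V ≃ₗ[K] V} (h : IsMonomial b σ g)
    {x : V ≃ₗ[K] V} (hx : x ∈ DiagSet b) : (g.symm.trans x).trans g ∈ DiagSet b := by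
  intro s
  obtain ⟨c, hc⟩ := h.symm s
  obtain ⟨c', hc'⟩ := hx (σ.symm s)
  obtain ⟨c'', hc''⟩ := h (σ.symm s)
  rw [Equiv.apply_symm_apply] at hc''
  exact ⟨c * c' * c'', by simp only [LinearEquiv.trans_apply, hc, map_smul, hc', hc'', smul_smul]⟩

lemma IsMonomial.image_conj_diagSet {σ : Equiv.Perm S} {g : V ≃ₗ[K] V}
    (h : IsMonomial b σ g) :
    (fun d : V ≃ₗ[K] V => (g.symm.trans d).trans g) '' DiagSet b = DiagSet b := by
  refine subset_antisymm ?_ fun y hy => ⟨(g.trans y).trans g.symm, ?_, ?_⟩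
  · rintro _ ⟨x, hx, rfl⟩
    exact h.conj_mem hx
  · simpa using h.symm.conj_mem hy
  · ext v
    simp

lemma isMonomial_iff_exists_mem_diagSet (σ : Equiv.Perm S) (g : V ≃ₗ[K] V) :
    IsMonomial b σ g ↔ ∃ d ∈ DiagSet b, g = (PermMap b σ).trans d := by
  constructor
  · refine fun h => ⟨(PermMap b σ).symm.trans g, fun s => ?_, by ext; simp⟩
    obtain ⟨c, hc⟩ := h (σ.symm s)
    exact ⟨c, by simpa using hc⟩
  · rintro ⟨d, hd, rfl⟩ s
    simpa using hd (σ s)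

lemma exists_isMonomial_of_image_conj_diagSet_eq [CharZero K] [Finite S] {g : V ≃ₗ[K] V}
    (h : (fun d : V ≃ₗ[K] V => (g.symm.trans d).trans g) '' DiagSet b = DiagSet b) :
    ∃ σ : Equiv.Perm S, IsMonomial b σ g := by
  obtain ⟨w, hw⟩ := exists_injective_units K S
  obtain ⟨d, hd⟩ := exists_equiv_apply_basis_eq_smul b w
  have hdD : d ∈ DiagSet b := fun s => ⟨w s, hd s⟩
  rw [← h] at hdD
  obtain ⟨x, hx, hxd⟩ := hdD
  have hg : ∀ t, ∃ s, ∃ a : K, g (b t) = a • b s := fun t => by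
    obtain ⟨c, hc⟩ := hx t
    refine exists_eq_smul_basis_of_apply_eq_smul b (f := d.toLinearMap)
      (Units.val_injective.comp hw) hd (by simp [b.ne_zero]) (c := c) ?_
    simp [← hxd, hc]
  choose τ a hτ using hg
  exact IsMonomial.exists_perm (τ := τ) fun t => ⟨a t, hτ t⟩

end

section

variable {K V : Type*} [Field K] [CharZero K] [AddCommGroup V] [Module K V]
variable {S : Type*} [Fintype S] [DecidableEq S]

theorem normalizer_diag_eq_general (b : Module.Basis S K V) (g : V ≃ₗ[K] V) :
    (fun d : V ≃ₗ[K] V => (g.symm.trans d).trans g) '' DiagSet b = DiagSet b ↔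
      ∃ d ∈ DiagSet b, ∃ σ : Equiv.Perm S, g = (PermMap b σ).trans d := by
  constructor
  · intro h
    obtain ⟨σ, hσ⟩ := exists_isMonomial_of_image_conj_diagSet_eq h
    obtain ⟨d, hd, hg⟩ := (isMonomial_iff_exists_mem_diagSet σ g).mp hσ
    exact ⟨d, hd, σ, hg⟩
  · rintro ⟨d, hd, σ, hg⟩
    exact ((isMonomial_iff_exists_mem_diagSet σ g).mpr ⟨d, hd, hg⟩).image_conj_diagSet

/-- Let `K` be a field of characteristic `0`, `V` a finite-dimensional
`K`-vector space with basis `S`, and `D ≤ GL(V)` the subgroup of automorphisms that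
are diagonal with respect to `S`.  Then the normalizer of `D` in `GL(V)` equals
`D · P(Perm(S)) = { d ∘ P_σ : d ∈ D, σ a permutation of S }`; i.e. `g` normalizes `D`
(meaning `g D g⁻¹ = D`) iff `g = d ∘ P_σ` for some `d ∈ D` and permutation `σ`. -/
theorem normalizer_diag_eq [FiniteDimensional K V] (b : Module.Basis S K V) (g : V ≃ₗ[K] V) :
    (fun d : V ≃ₗ[K] V => (g.symm.trans d).trans g) '' DiagSet b = DiagSet b ↔
      ∃ d ∈ DiagSet b, ∃ σ : Equiv.Perm S, g = (PermMap b σ).trans d :=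
  normalizer_diag_eq_general b g
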